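/- A periodic point ϑ of period T = m·T_min is nondegenerate of order m (i.e. Ker((d_ϑP)^m − Id) = 0 for the Poincaré map P) if and only if the algebraic multiplicity of λ = 1 as an eigenvalue of d_ϑψ_T restricted to T_ϑH^{-1}(k) equals 1. -/
import Mathlib

open Polynomial Matrix

/-- A periodic point `ϑ` of period `T = m·T_min` is nondegenerate of order
`m` (i.e. `Ker((d_ϑP)^m − Id) = 0` for the Poincaré map `P`) if and only if the
algebraic multiplicity of `λ = 1` as an eigenvalue of `d_ϑψ_T` restricted to
`T_ϑH⁻¹(k)` equals `1`.  The restriction of `d_ϑψ_T` is represented in an adapted basis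
by the block-triangular matrix `A` with diagonal blocks `1` and `(d_ϑP)^m`. -/
theorem stmt_4 {n m : ℕ} (hm : 0 < m)
    (B : Matrix (Fin n) (Fin n) ℝ)   -- the differential of the Poincaré map d_ϑP
    (r : Fin n → ℝ)
    (A : Matrix (Fin 1 ⊕ Fin n) (Fin 1 ⊕ Fin n) ℝ)
    (hA : A = Matrix.fromBlocks 1 (Matrix.of fun _ j => r j) 0 (B ^ m)) :
    (∀ v : Fin n → ℝ, (B ^ m - 1).mulVec v = 0 → v = 0) ↔
      (Matrix.charpoly A).rootMultiplicity 1 = 1 := by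
  subst hA
  rw [Matrix.charpoly_fromBlocks_zero₂₁]
  have h1 : (1 : Matrix (Fin 1) (Fin 1) ℝ).charpoly = X - Polynomial.C 1 := by
    rw [Matrix.charpoly, Matrix.det_fin_one]
    simp [Matrix.charmatrix_apply]
  have hne : (B ^ m).charpoly ≠ 0 := (Matrix.charpoly_monic _).ne_zero
  have hprod : ((1 : Matrix (Fin 1) (Fin 1) ℝ).charpoly * (B ^ m).charpoly) ≠ 0 := by
    rw [h1]; exact mul_ne_zero (X_sub_C_ne_zero 1) hne
  rw [Polynomial.rootMultiplicity_mul hprod, h1,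
    Polynomial.rootMultiplicity_X_sub_C_self]
  have heval : Polynomial.eval 1 (B ^ m).charpoly = Matrix.det (1 - B ^ m) := by
    rw [Matrix.charpoly, ← Polynomial.coe_evalRingHom, RingHom.map_det]
    congr 1
    ext i j
    by_cases h : i = j <;>
      simp [Matrix.charmatrix_apply, Matrix.one_apply, h]
  constructor
  · intro hker
    have hdet : Matrix.det (B ^ m - 1) ≠ 0 := by
      intro h0
      obtain ⟨v, hv, hv0⟩ := Matrix.exists_mulVec_eq_zero_iff.mpr h0
      exact hv (hker v hv0)
    have hdet' : Matrix.det (1 - B ^ m) ≠ 0 := by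
      have : (1 : Matrix (Fin n) (Fin n) ℝ) - B ^ m = -(B ^ m - 1) := (neg_sub _ _).symm
      rw [this, Matrix.det_neg]
      simp only [ne_eq, mul_eq_zero, not_or]
      exact ⟨pow_ne_zero _ (by norm_num), hdet⟩
    have hroot : ¬ (B ^ m).charpoly.IsRoot 1 := by
      rw [Polynomial.IsRoot, heval]; exact hdet'
    rw [Polynomial.rootMultiplicity_eq_zero hroot]
  · intro hmult
    have hrm : (B ^ m).charpoly.rootMultiplicity 1 = 0 := by omega
    have hroot : ¬ (B ^ m).charpoly.IsRoot 1 := by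
      intro hr
      have := (Polynomial.rootMultiplicity_pos hne).mpr hr
      omega
    have hdet' : Matrix.det (1 - B ^ m) ≠ 0 := by
      rw [← heval]; exact hroot
    have hdet : Matrix.det (B ^ m - 1) ≠ 0 := by
      have h : (B ^ m) - 1 = -((1 : Matrix (Fin n) (Fin n) ℝ) - B ^ m) := (neg_sub _ _).symm
      rw [h, Matrix.det_neg]
      simp only [ne_eq, mul_eq_zero, not_or]
      exact ⟨pow_ne_zero _ (by norm_num), hdet'⟩
    have hinj : Function.Injective (B ^ m - 1).mulVec := by
      rw [Matrix.mulVec_injective_iff_isUnit, Matrix.isUnit_iff_isUnit_det]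
      exact hdet.isUnit
    exact fun v hv => hinj (by rw [hv, Matrix.mulVec_zero])
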